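/- arXiv:2512.08096 — 3 statements merged into one kernel-verified Lean document; each statement's English description precedes it below -/
import Mathlib

section
/- If q = (1/e)^(1/n) for a positive integer n, then both 1 - q^n and P_n(q) = (1/n)∑_{l=0}^{n-1} q^l are at least 1 - 1/e. -/
theorem stmt2 (n : ℕ) (hn : 0 < n) (q : ℝ)
    (hq : q = (1 / Real.exp 1) ^ ((1 : ℝ) / n)) :
    1 - q ^ n ≥ 1 - 1 / Real.exp 1 ∧
      (1 / (n : ℝ)) * ∑ l ∈ Finset.range n, q ^ l ≥ 1 - 1 / Real.exp 1 := by
  have hn' : (n : ℝ) ≠ 0 := Nat.cast_ne_zero.mpr hn.ne'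
  have hnpos : (0 : ℝ) < n := by exact_mod_cast hn
  have hq' : q = Real.exp (-(1 / n)) := by
    rw [hq, one_div, ← Real.exp_neg, ← Real.exp_one_rpow (-(1/(n:ℝ))),
      ← Real.exp_one_rpow (-1 : ℝ), ← Real.rpow_mul (le_of_lt (Real.exp_pos 1))]
    norm_num
  have hqn : q ^ n = 1 / Real.exp 1 := by
    rw [hq', ← Real.exp_nat_mul, show (n:ℝ) * -(1/(n:ℝ)) = -1 by field_simp,
      Real.exp_neg, one_div]
  have hqlt : q < 1 := by
    rw [hq']
    apply Real.exp_lt_one_iff.mpr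
    simp [one_div]
    positivity
  have hqge : 1 - 1 / (n : ℝ) ≤ q := by
    have := Real.add_one_le_exp (-(1 / (n : ℝ)))
    rw [← hq'] at this
    linarith
  have hA : (0 : ℝ) < 1 - 1 / Real.exp 1 := by
    have : 1 < Real.exp 1 := by
      have := Real.add_one_le_exp (1 : ℝ); linarith
    have : 1 / Real.exp 1 < 1 := by
      rw [div_lt_one (Real.exp_pos 1)]; exact this
    linarith
  have h1q : (0 : ℝ) < 1 - q := by linarith
  constructor
  · rw [hqn]
  · rw [geom_sum_eq (ne_of_lt hqlt), hqn]
    have heq : (1 : ℝ)/n * ((1/Real.exp 1 - 1)/(q-1))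
        = (1 - 1/Real.exp 1)/((n:ℝ)*(1-q)) := by
      have hq1 : q - 1 ≠ 0 := sub_ne_zero.mpr (ne_of_lt hqlt)
      field_simp
      ring
    rw [heq, ge_iff_le, le_div_iff₀ (by positivity)]
    have hkey : (n : ℝ) * (1 - q) ≤ 1 := by
      have : (n : ℝ) * (1 / n) = 1 := by field_simp
      nlinarith
    nlinarith
end

section
/- Let V₁,...,Vₙ be i.i.d. nonnegative random variables with CDF G, and let τ₁ be a threshold. Define ALG as the reward of an algorithm that selects uniformly at random one reward among those exceeding τ₁ (if any). Then E[ALG] ≥ (1 - G(τ₁)^n)·τ₁ + P_n(G(τ₁))·∑_{i=1}^n E[(V_i - τ₁)^+], where P_n(x) = (1/n)(1-x^n)/(1-x). -/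
/-!
Let `p = 1 - G(τ)` and let `N₋ᵢ` count the indices `j ≠ i` with `Vⱼ > τ`. The selection rule
picks `i` with density `1{Vᵢ > τ} / (1 + N₋ᵢ)`, and `N₋ᵢ` is a function of `(Vⱼ)_{j ≠ i}`, hence
independent of `Vᵢ`. Therefore
`E[ALG] = ∑ᵢ E[Vᵢ 1{Vᵢ > τ}] · E[1 / (1 + N₋ᵢ)] = ∑ᵢ (p τ + E[(Vᵢ - τ)⁺]) · E[1 / (1 + N₋ᵢ)]`.
Expanding `1 / (1 + b) = ∑_{T ⊆ [b]} (-1)^|T| / (|T| + 1)` turns `E[1 / (1 + N₋ᵢ)]` into a sum of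
probabilities of intersections `p^|T|`, which adds up to `(1 - (1 - p)ⁿ) / (n p) = P_n(G(τ))`.
So the bound holds with equality as soon as `G(τ) < 1`.
-/

open MeasureTheory ProbabilityTheory Finset

/-- `E[1 / (1 + X)]` for `X ~ Binomial(m, p)`, written as a polynomial in `p`. -/
noncomputable def binomialInvMean (m : ℕ) (p : ℝ) : ℝ :=
  ∑ k ∈ range (m + 1), (m.choose k : ℝ) * ((-p) ^ k / (k + 1))

lemma add_one_mul_mul_binomialInvMean (m : ℕ) (p : ℝ) :
    (m + 1) * p * binomialInvMean m p = 1 - (1 - p) ^ (m + 1) := by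
  have hterm : ∀ k ∈ range (m + 1), (m + 1) * p * ((m.choose k : ℝ) * ((-p) ^ k / (k + 1)))
      = -((-p) ^ (k + 1) * ((m + 1).choose (k + 1) : ℝ)) := by
    intro k _
    have hchoose : ((m + 1).choose (k + 1) : ℝ) * (k + 1) = (m + 1) * m.choose k := by
      exact_mod_cast (Nat.add_one_mul_choose_eq m k).symm
    field_simp
    linear_combination (-(p * (-p) ^ k)) * hchoose
  have hbinom := add_pow (-p) 1 (m + 1)
  rw [sum_range_succ', neg_add_eq_sub] at hbinom
  simp only [one_pow, mul_one, pow_zero, Nat.choose_zero_right, Nat.cast_one] at hbinom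
  rw [binomialInvMean, mul_sum, sum_congr rfl hterm, sum_neg_distrib, hbinom]
  ring

lemma binomialInvMean_zero (m : ℕ) : binomialInvMean m 0 = 1 := by
  simp [binomialInvMean, sum_range_succ']

lemma binomialInvMean_one (m : ℕ) : binomialInvMean m 1 = ((m : ℝ) + 1)⁻¹ := by
  have h := add_one_mul_mul_binomialInvMean m 1
  rw [sub_self, zero_pow m.succ_ne_zero, sub_zero, mul_one] at h
  exact eq_inv_of_mul_eq_one_right h

lemma sum_powerset_neg_pow_div_card_add_one {α : Type*} (s : Finset α) (p : ℝ) :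
    ∑ T ∈ s.powerset, (-p) ^ #T / (#T + 1 : ℝ) = binomialInvMean #s p := by
  simp only [sum_powerset_apply_card (fun k => (-p) ^ k / (k + 1 : ℝ)), nsmul_eq_mul,
    binomialInvMean]

lemma inv_card_filter_add_one_eq_sum_powerset {ι Ω : Type*} (A : ι → Set Ω) (s : Finset ι)
    (ω : Ω) [DecidablePred (fun j => ω ∈ A j)] :
    ((#{j ∈ s | ω ∈ A j} : ℝ) + 1)⁻¹
      = ∑ T ∈ s.powerset, (-1) ^ #T / (#T + 1 : ℝ) * (⋂ j ∈ T, A j).indicator 1 ω := by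
  classical
  set b := {j ∈ s | ω ∈ A j}
  have hmem : ∀ T ∈ s.powerset, ω ∈ ⋂ j ∈ T, A j ↔ T ⊆ b := by
    intro T hT
    simp only [Set.mem_iInter, subset_iff, b, mem_filter]
    exact forall₂_congr fun j hj => (and_iff_right (mem_powerset.1 hT hj)).symm
  have hfilter : {T ∈ s.powerset | T ⊆ b} = b.powerset := by
    ext T
    simp only [mem_filter, mem_powerset]
    exact ⟨And.right, fun h => ⟨h.trans (filter_subset _ s), h⟩⟩
  rw [← binomialInvMean_one, ← sum_powerset_neg_pow_div_card_add_one, ← hfilter, sum_filter]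
  refine sum_congr rfl fun T hT => ?_
  rw [Set.indicator_apply, if_congr (hmem T hT) rfl rfl]
  split_ifs <;> simp

lemma ite_one_div_card_filter_mul_eq {ι : Type*} [Fintype ι] [DecidableEq ι] (v : ι → ℝ)
    (τ : ℝ) (i : ι) :
    (if τ < v i then (1 : ℝ) / #{j | τ < v j} else 0) * v i
      = (Set.Ioi τ).indicator id (v i) * ((#{j ∈ univ.erase i | v j ∈ Set.Ioi τ} : ℝ) + 1)⁻¹ := by
  split_ifs with h
  · rw [Set.indicator_of_mem (Set.mem_Ioi.2 h), id, ← Nat.cast_add_one]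
    simp only [Set.mem_Ioi]
    rw [filter_erase, card_erase_add_one (mem_filter.2 ⟨mem_univ i, h⟩), one_div, mul_comm]
  · rw [Set.indicator_of_notMem (mt Set.mem_Ioi.1 h), zero_mul, zero_mul]

section Integrals

variable {Ω : Type*} [MeasurableSpace Ω] {μ : Measure Ω}

lemma integral_inv_card_filter_add_one [IsFiniteMeasure μ] {ι : Type*} {A : ι → Set Ω}
    (hA : ∀ j, MeasurableSet (A j)) (s : Finset ι) {p : ℝ}
    (hp : ∀ T ⊆ s, μ.real (⋂ j ∈ T, A j) = p ^ #T)
    [decA : ∀ ω, DecidablePred (fun j => ω ∈ A j)] :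
    ∫ ω, ((#{j ∈ s | ω ∈ A j} : ℝ) + 1)⁻¹ ∂μ = binomialInvMean #s p := by
  have hmeas : ∀ T : Finset ι, MeasurableSet (⋂ j ∈ T, A j) :=
    fun T => T.measurableSet_biInter fun j _ => hA j
  simp_rw [inv_card_filter_add_one_eq_sum_powerset A s]
  rw [integral_finsetSum _ fun T _ => ((integrable_const 1).indicator (hmeas T)).const_mul _,
    ← sum_powerset_neg_pow_div_card_add_one]
  refine sum_congr rfl fun T hT => ?_
  rw [integral_const_mul, integral_indicator_one (hmeas T), hp T (mem_powerset.1 hT), neg_pow]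
  ring

lemma integral_mul_inv_card_filter_add_one [IsProbabilityMeasure μ] {ι β : Type*}
    [MeasurableSpace β] {V : ι → Ω → β} (hindep : iIndepFun V μ) (hmeas : ∀ j, Measurable (V j))
    {B : Set β} (hB : MeasurableSet B) {p : ℝ} (hp : ∀ j, μ.real (V j ⁻¹' B) = p)
    {i : ι} {s : Finset ι} (his : i ∉ s) {f : β → ℝ} (hf : Measurable f)
    [∀ ω, DecidablePred (fun j => V j ω ∈ B)] :
    ∫ ω, f (V i ω) * ((#{j ∈ s | V j ω ∈ B} : ℝ) + 1)⁻¹ ∂μ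
      = (∫ ω, f (V i ω) ∂μ) * binomialInvMean #s p := by
  set count : (s → β) → ℝ := fun v => (∑ j : s, B.indicator 1 (v j) + 1)⁻¹
  have hcount : Measurable count := by fun_prop
  have hcount_eq : ∀ ω, count (fun j : s => V j ω) = ((#{j ∈ s | V j ω ∈ B} : ℝ) + 1)⁻¹ := by
    intro ω
    simp only [count, card_filter, sum_coe_sort s (fun j => B.indicator 1 (V j ω))]
    simp [Set.indicator_apply]
  have hindep_count :=
    (hindep.indepFun_finset {i} s (disjoint_singleton_left.2 his) hmeas).comp
      (hf.comp (measurable_pi_apply ⟨i, mem_singleton_self i⟩)) hcount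
  have hsplit := hindep_count.integral_fun_mul_eq_mul_integral
    (hf.comp (hmeas i)).aestronglyMeasurable
    (hcount.comp (measurable_pi_lambda _ fun j => hmeas j)).aestronglyMeasurable
  simp only [Function.comp_apply, hcount_eq] at hsplit
  rw [hsplit]
  congr 1
  refine integral_inv_card_filter_add_one (μ := μ) (A := fun j => V j ⁻¹' B) (decA := ‹_›)
    (fun j => hmeas j hB) s fun T _ => ?_
  rw [Measure.real, hindep.meas_biInter fun j _ => ⟨B, hB, rfl⟩, ENNReal.toReal_prod]
  exact (prod_congr rfl fun j _ => hp j).trans (prod_const p)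

lemma setIntegral_eq_integral_mul_of_measureReal_inter_eq [IsFiniteMeasure μ] {S : Set Ω}
    {D : Ω → ℝ} (hDm : Measurable D) (hD0 : ∀ ω, 0 ≤ D ω) (hDi : Integrable D μ)
    (hS : ∀ A, MeasurableSet A → μ.real (A ∩ S) = ∫ ω in A, D ω ∂μ) (f : Ω → ℝ) :
    ∫ ω in S, f ω ∂μ = ∫ ω, D ω * f ω ∂μ := by
  have hdensity : μ.restrict S = μ.withDensity fun ω => ENNReal.ofReal (D ω) := by
    ext A hA
    rw [Measure.restrict_apply hA, withDensity_apply _ hA, ← ofReal_measureReal, hS A hA,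
      ofReal_integral_eq_lintegral_ofReal hDi.integrableOn (ae_of_all _ hD0)]
  rw [hdensity, integral_withDensity_eq_integral_toReal_smul hDm.ennreal_ofReal
    (ae_of_all _ fun _ => ENNReal.ofReal_lt_top)]
  simp only [ENNReal.toReal_ofReal (hD0 _), smul_eq_mul]

lemma integral_option_elim_eq_sum_setIntegral {ι : Type*} [Fintype ι] {sel : Ω → Option ι}
    (hsel : ∀ i, MeasurableSet {ω | sel ω = some i}) {V : ι → Ω → ℝ}
    (hV : ∀ i, Integrable (V i) μ) :
    ∫ ω, (sel ω).elim 0 (fun i => V i ω) ∂μ = ∑ i, ∫ ω in {ω | sel ω = some i}, V i ω ∂μ := by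
  have hsum : ∀ ω, (sel ω).elim 0 (fun i => V i ω)
      = ∑ i, {ω | sel ω = some i}.indicator (V i) ω := by
    intro ω
    cases h : sel ω with
    | none => simp [h]
    | some i =>
      rw [sum_eq_single i (fun j _ hji => by simp [h, Ne.symm hji]) (by simp)]
      simp [h]
  simp_rw [hsum]
  rw [integral_finsetSum _ fun i _ => (hV i).indicator (hsel i)]
  exact sum_congr rfl fun i _ => integral_indicator (hsel i)

lemma setIntegral_uniformSelection [IsProbabilityMeasure μ] {ι : Type*} [Fintype ι]
    {V : ι → Ω → ℝ} (hindep : iIndepFun V μ) (hmeas : ∀ j, Measurable (V j)) {τ p : ℝ}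
    (hp : ∀ j, μ.real {ω | τ < V j ω} = p) {S : Set Ω} {i : ι}
    (hS : ∀ A, MeasurableSet A → μ.real (A ∩ S)
      = ∫ ω in A, (if τ < V i ω then (1 : ℝ) / #{j | τ < V j ω} else 0) ∂μ)
    (hint : Integrable (V i) μ) :
    ∫ ω in S, V i ω ∂μ
      = binomialInvMean (Fintype.card ι - 1) p * (p * τ + ∫ ω, max (V i ω - τ) 0 ∂μ) := by
  classical
  have hpass : ∀ j, MeasurableSet {ω | τ < V j ω} :=
    fun j => measurableSet_lt measurable_const (hmeas j)
  have hcard : Measurable fun ω => (#{j | τ < V j ω} : ℝ) := by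
    simp_rw [card_filter]
    push_cast
    exact measurable_sum _ fun j _ => Measurable.ite (hpass j) measurable_const measurable_const
  have hD : Measurable fun ω => if τ < V i ω then (1 : ℝ) / #{j | τ < V j ω} else 0 :=
    Measurable.ite (hpass i) (measurable_const.div hcard) measurable_const
  have hD0 : ∀ ω, 0 ≤ if τ < V i ω then (1 : ℝ) / #{j | τ < V j ω} else 0 := by
    intro ω; split_ifs <;> positivity
  have hD1 : ∀ ω, ‖if τ < V i ω then (1 : ℝ) / #{j | τ < V j ω} else 0‖ ≤ 1 := by
    intro ω; split_ifs <;> simp [Nat.cast_inv_le_one]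
  have hsplit : ∀ ω, (Set.Ioi τ).indicator id (V i ω)
      = {ω | τ < V i ω}.indicator (fun _ => τ) ω + max (V i ω - τ) 0 := by
    intro ω
    by_cases h : τ < V i ω
    · simp [h, Set.indicator_of_mem, h.le]
    · simp [h, Set.indicator_of_notMem, not_lt.1 h]
  have hpos : Integrable (fun ω => max (V i ω - τ) 0) μ := (hint.sub (integrable_const τ)).pos_part
  rw [setIntegral_eq_integral_mul_of_measureReal_inter_eq hD hD0
      (Integrable.of_bound hD.aestronglyMeasurable 1 (ae_of_all _ hD1)) hS,
    integral_congr_ae (ae_of_all _ fun ω => ite_one_div_card_filter_mul_eq (V · ω) τ i),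
    integral_mul_inv_card_filter_add_one hindep hmeas measurableSet_Ioi hp (notMem_erase i univ)
      (measurable_id.indicator measurableSet_Ioi),
    card_erase_of_mem (mem_univ i), card_univ, mul_comm]
  simp_rw [hsplit]
  rw [integral_add ((integrable_const τ).indicator (hpass i)) hpos,
    integral_indicator_const _ (hpass i), hp, smul_eq_mul]

end Integrals

theorem stmt6_general {Ω : Type*} [MeasurableSpace Ω] (μ : Measure Ω) [IsProbabilityMeasure μ]
    (n : ℕ) (hn : 0 < n) (V : Fin n → Ω → ℝ) (τ : ℝ)
    (hmeas : ∀ i, Measurable (V i))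
    (hindep : iIndepFun V μ)
    (G : ℝ → ℝ) (hG : ∀ i t, (μ {ω | V i ω ≤ t}).toReal = G t)
    (sel : Ω → Option (Fin n))
    (hsel_meas : ∀ i, MeasurableSet {ω | sel ω = some i})
    (hunif : ∀ i A, MeasurableSet A →
      (μ (A ∩ {ω | sel ω = some i})).toReal
        = ∫ ω in A, (if τ < V i ω then
            (1 : ℝ) / (Finset.univ.filter (fun j => τ < V j ω)).card else 0) ∂μ)
    (ALG : Ω → ℝ) (hALG : ∀ ω, ALG ω = (sel ω).elim 0 (fun i => V i ω))
    (hint : ∀ i, Integrable (V i) μ) :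
    (1 - G τ ^ n) * τ
        + ((1 / (n : ℝ)) * (1 - G τ ^ n) / (1 - G τ))
          * ∑ i, ∫ ω, max (V i ω - τ) 0 ∂μ
      ≤ ∫ ω, ALG ω ∂μ := by
  obtain ⟨m, rfl⟩ := Nat.exists_eq_add_one_of_ne_zero hn.ne'
  set p := 1 - G τ with hp
  have hpass : ∀ j, μ.real {ω | τ < V j ω} = p := fun j => by
    rw [hp, ← hG j τ, ← measureReal_def, ← probReal_compl_eq_one_sub
      (measurableSet_le (hmeas j) measurable_const)]
    simp only [Set.compl_ofPred, not_le]
  have hsel : ∀ i, ∫ ω in {ω | sel ω = some i}, V i ω ∂μ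
      = binomialInvMean m p * (p * τ + ∫ ω, max (V i ω - τ) 0 ∂μ) := fun i => by
    simpa using setIntegral_uniformSelection hindep hmeas hpass (hunif i) (hint i)
  have hcoef := add_one_mul_mul_binomialInvMean m p
  rw [integral_congr_ae (ae_of_all _ hALG), integral_option_elim_eq_sum_setIntegral hsel_meas hint]
  simp_rw [hsel]
  rw [← mul_sum, sum_add_distrib, sum_const, card_univ, Fintype.card_fin, nsmul_eq_mul]
  rw [show G τ = 1 - p by rw [hp]; ring, ← hcoef]
  push_cast
  rcases eq_or_ne p 0 with h0 | h0
  -- `G τ = 1`: the left side vanishes, its coefficient being `0 / 0 = 0`.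
  · simp only [h0, binomialInvMean_zero, mul_zero, zero_mul, div_zero, zero_add, one_mul]
    exact sum_nonneg fun i _ => integral_nonneg fun ω => le_max_right _ _
  · apply le_of_eq
    field_simp

/-- One round of the descending auction: selecting uniformly at random a reward exceeding
the threshold `τ` (if any) yields expected reward at least
`(1 - G(τ)^n)·τ + P_n(G(τ))·∑ᵢ E[(Vᵢ - τ)⁺]`, where `P_n(x) = (1/n)(1-xⁿ)/(1-x)`. -/
theorem stmt6 {Ω : Type*} [MeasurableSpace Ω] (μ : Measure Ω) [IsProbabilityMeasure μ]
    (n : ℕ) (hn : 0 < n) (V : Fin n → Ω → ℝ) (τ : ℝ) (hτ : 0 ≤ τ)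
    (hmeas : ∀ i, Measurable (V i)) (hnn : ∀ i ω, 0 ≤ V i ω)
    (hindep : iIndepFun V μ)
    (G : ℝ → ℝ) (hG : ∀ i t, (μ {ω | V i ω ≤ t}).toReal = G t)
    (sel : Ω → Option (Fin n))
    (hselpass : ∀ ω i, sel ω = some i → τ < V i ω)
    (hselnone : ∀ ω, sel ω = none ↔ ∀ i, V i ω ≤ τ)
    (hsel_meas : ∀ i, MeasurableSet {ω | sel ω = some i})
    (hunif : ∀ i A, MeasurableSet A →
      (μ (A ∩ {ω | sel ω = some i})).toReal
        = ∫ ω in A, (if τ < V i ω then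
            (1 : ℝ) / (Finset.univ.filter (fun j => τ < V j ω)).card else 0) ∂μ)
    (ALG : Ω → ℝ) (hALG : ∀ ω, ALG ω = (sel ω).elim 0 (fun i => V i ω))
    (hint : ∀ i, Integrable (V i) μ) (hintALG : Integrable ALG μ) :
    (1 - G τ ^ n) * τ
        + ((1 / (n : ℝ)) * (1 - G τ ^ n) / (1 - G τ))
          * ∑ i, ∫ ω, max (V i ω - τ) 0 ∂μ
      ≤ ∫ ω, ALG ω ∂μ :=
  stmt6_general μ n hn V τ hmeas hindep G hG sel hsel_meas hunif ALG hALG hint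
end

section
/- Let v be a random variable on [0, v_max] with CDF F and density f, and let x: [0, v_max] → [0,1] be a nondecreasing differentiable allocation function with x(0)=0. Define the Myerson payment p(v) = ∫₀^v z·x'(z) dz. Then E[p(v)] = E[φ(v)·x(v)], where φ(z) = z - (1-F(z))/f(z). -/
/-!
Integrating by parts, the payment is `p(v) = v x(v) - ∫₀^v x`. Exchanging the order of
integration over the triangle `0 ≤ z ≤ v ≤ vmax` gives `E[∫₀^v x] = ∫ x (1 - F)`, the tail
`∫_v^vmax f` being `1 - F v` because `F vmax = 1`. Hence `E[p] = ∫ (v f - (1 - F)) x`, which is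
`E[φ x]` as `f > 0`.
-/

open Set MeasureTheory intervalIntegral

theorem hasDerivWithinAt_integral_of_continuousOn_Icc {E : Type*} [NormedAddCommGroup E]
    [NormedSpace ℝ E] [CompleteSpace E] {f : ℝ → E} {a b c v : ℝ}
    (hf : ContinuousOn f (Icc a b)) (hc : c ∈ Icc a b) (hv : v ∈ Icc a b) :
    HasDerivWithinAt (fun u => ∫ z in c..u, f z) (f v) (Icc a b) v := by
  have : Fact (v ∈ Icc a b) := ⟨hv⟩
  exact integral_hasDerivWithinAt_right (hf.mono (uIcc_subset_Icc hc hv)).intervalIntegrable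
    (hf.stronglyMeasurableAtFilter_nhdsWithin measurableSet_Icc v) (hf v hv)

theorem integral_mul_deriv_eq_sub_integral {x x' : ℝ → ℝ} {a b : ℝ}
    (hx : ∀ z ∈ uIcc a b, HasDerivAt x (x' z) z) (hx' : IntervalIntegrable x' volume a b) :
    ∫ z in a..b, z * x' z = b * x b - a * x a - ∫ z in a..b, x z := by
  simpa using integral_mul_deriv_eq_deriv_mul (fun z _ => hasDerivAt_id z) hx
    intervalIntegrable_const hx'

/-- Fubini over the triangle `a ≤ z ≤ v ≤ b`, proved by integrating by parts against
`v ↦ ∫ z in b..v, f z`, which vanishes at `b`. -/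
theorem integral_primitive_mul_eq_integral_mul_tail {g f : ℝ → ℝ} {a b : ℝ} (hab : a ≤ b)
    (hg : ContinuousOn g (Icc a b)) (hf : ContinuousOn f (Icc a b)) :
    ∫ v in a..b, (∫ z in a..v, g z) * f v = ∫ v in a..b, g v * ∫ z in v..b, f z := by
  have ha : a ∈ Icc a b := left_mem_Icc.2 hab
  have hb : b ∈ Icc a b := right_mem_Icc.2 hab
  rw [← uIcc_of_le hab] at hg hf
  rw [integral_mul_deriv_eq_deriv_mul_of_hasDerivWithinAt (u' := g)
    (v := fun v => ∫ z in b..v, f z) (fun v hv => ?_) (fun v hv => ?_)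
    hg.intervalIntegrable hf.intervalIntegrable]
  · simp only [integral_same, mul_zero, zero_mul, sub_zero, zero_sub,
      ← intervalIntegral.integral_neg]
    congr 1 with v
    rw [integral_symm v b, mul_neg, neg_neg]
  all_goals rw [uIcc_of_le hab] at hv hg hf ⊢
  · exact hasDerivWithinAt_integral_of_continuousOn_Icc hg ha hv
  · exact hasDerivWithinAt_integral_of_continuousOn_Icc hf hb hv

theorem integral_payment_mul_eq {x x' f : ℝ → ℝ} {a b : ℝ} (hab : a ≤ b)
    (hf : ContinuousOn f (Icc a b)) (hx : ∀ v ∈ Icc a b, HasDerivAt x (x' v) v)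
    (hx' : ContinuousOn x' (Icc a b)) :
    ∫ v in a..b, (∫ z in a..v, z * x' z) * f v
      = ∫ v in a..b, (v * x v - a * x a) * f v - x v * ∫ z in v..b, f z := by
  have ha : a ∈ Icc a b := left_mem_Icc.2 hab
  have hI : uIcc a b = Icc a b := uIcc_of_le hab
  have hxc : ContinuousOn x (Icc a b) := fun v hv => (hx v hv).continuousAt.continuousWithinAt
  have hXc : ContinuousOn (fun v => ∫ z in a..v, x z) (Icc a b) := fun v hv =>
    (hasDerivWithinAt_integral_of_continuousOn_Icc hxc ha hv).continuousWithinAt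
  have htail : ContinuousOn (fun v => ∫ z in v..b, f z) (Icc a b) :=
    hI ▸ continuousOn_primitive_interval_left (hI ▸ hf.integrableOn_Icc)
  have hpf : ContinuousOn (fun v => (v * x v - a * x a) * f v) (Icc a b) :=
    ((continuousOn_id.mul hxc).sub continuousOn_const).mul hf
  calc ∫ v in a..b, (∫ z in a..v, z * x' z) * f v
      = ∫ v in a..b, (v * x v - a * x a) * f v - (∫ z in a..v, x z) * f v :=
        integral_congr fun v hv => by
          have hsub : uIcc a v ⊆ Icc a b := uIcc_subset_Icc ha (hI.subset hv)
          rw [integral_mul_deriv_eq_sub_integral (fun z hz => hx z (hsub hz))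
            (hx'.mono hsub).intervalIntegrable, sub_mul]
    _ = (∫ v in a..b, (v * x v - a * x a) * f v) - ∫ v in a..b, (∫ z in a..v, x z) * f v :=
        integral_sub (hpf.intervalIntegrable_of_Icc hab)
          ((hXc.mul hf).intervalIntegrable_of_Icc hab)
    _ = (∫ v in a..b, (v * x v - a * x a) * f v) - ∫ v in a..b, x v * ∫ z in v..b, f z := by
        rw [integral_primitive_mul_eq_integral_mul_tail hab hxc hf]
    _ = ∫ v in a..b, (v * x v - a * x a) * f v - x v * ∫ z in v..b, f z :=
        (integral_sub (hpf.intervalIntegrable_of_Icc hab)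
          ((hxc.mul htail).intervalIntegrable_of_Icc hab)).symm

theorem stmt13_general (vmax : ℝ) (hv : 0 < vmax) (F f x x' : ℝ → ℝ)
    (hfc : ContinuousOn f (Set.Icc 0 vmax))
    (hfpos : ∀ v ∈ Set.Icc 0 vmax, 0 < f v)
    (hF : ∀ v ∈ Set.Icc 0 vmax, F v = ∫ z in (0:ℝ)..v, f z)
    (hFmax : F vmax = 1)
    (hx' : ∀ v ∈ Set.Icc 0 vmax, HasDerivAt x (x' v) v)
    (hx'c : ContinuousOn x' (Set.Icc 0 vmax)) :
    ∫ v in (0:ℝ)..vmax, (∫ z in (0:ℝ)..v, z * x' z) * f v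
      = ∫ v in (0:ℝ)..vmax, (v - (1 - F v) / f v) * x v * f v := by
  have h0 : (0 : ℝ) ∈ Icc 0 vmax := left_mem_Icc.2 hv.le
  have hvmax : vmax ∈ Icc 0 vmax := right_mem_Icc.2 hv.le
  have htail : ∀ v ∈ Icc 0 vmax, ∫ z in v..vmax, f z = 1 - F v := fun v hvI => by
    rw [← hFmax, hF v hvI, hF vmax hvmax, integral_interval_sub_left
      (hfc.mono (uIcc_subset_Icc h0 hvmax)).intervalIntegrable
      (hfc.mono (uIcc_subset_Icc h0 hvI)).intervalIntegrable]
  rw [integral_payment_mul_eq hv.le hfc hx' hx'c]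
  refine integral_congr fun v hvI => ?_
  rw [uIcc_of_le hv.le] at hvI
  have := (hfpos v hvI).ne'
  simp only [htail v hvI, zero_mul, sub_zero]
  field_simp

/-- Myerson's revenue-equals-virtual-welfare identity for a single bidder. -/
theorem stmt13 (vmax : ℝ) (hv : 0 < vmax) (F f x x' : ℝ → ℝ)
    (hfc : ContinuousOn f (Set.Icc 0 vmax))
    (hfpos : ∀ v ∈ Set.Icc 0 vmax, 0 < f v)
    (hF : ∀ v ∈ Set.Icc 0 vmax, F v = ∫ z in (0:ℝ)..v, f z)
    (hFmax : F vmax = 1)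
    (hx0 : x 0 = 0)
    (hxmono : MonotoneOn x (Set.Icc 0 vmax))
    (hxrange : ∀ v ∈ Set.Icc 0 vmax, x v ∈ Set.Icc (0:ℝ) 1)
    (hx' : ∀ v ∈ Set.Icc 0 vmax, HasDerivAt x (x' v) v)
    (hx'c : ContinuousOn x' (Set.Icc 0 vmax)) :
    ∫ v in (0:ℝ)..vmax, (∫ z in (0:ℝ)..v, z * x' z) * f v
      = ∫ v in (0:ℝ)..vmax, (v - (1 - F v) / f v) * x v * f v :=
  stmt13_general vmax hv F f x x' hfc hfpos hF hFmax hx' hx'c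
end
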